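/- Let G be a local amoeba with minimum degree δ and maximum degree Δ. Then for every integer r with δ ≤ r ≤ Δ, there exists a vertex v of G with deg(v) = r. -/

import Mathlib

open SimpleGraph Equiv

/-- The labeled copy `G_σ`, with edges `v_{σ⁻¹ i} v_{σ⁻¹ j}` for edges `v_i v_j` of `G`. -/
def copyG {V : Type*} (G : SimpleGraph V) (σ : Equiv.Perm V) : SimpleGraph V where
  Adj a b := G.Adj (σ a) (σ b)
  symm := ⟨fun _ _ h => G.adj_symm h⟩
  loopless := ⟨fun _ h => G.irrefl h⟩

/-- The graph `G - v_r v_s + v_k v_l`. -/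
def replaceG {V : Type*} (G : SimpleGraph V) (r s k l : V) : SimpleGraph V :=
  SimpleGraph.fromEdgeSet ((G.edgeSet \ {s(r, s)}) ∪ {s(k, l)})

/-- The edge-replacement `rs → kl` is feasible: `v_r v_s ∈ E(G)`, `v_k v_l` is a non-edge or
`{k,l} = {r,s}`, and `G - v_r v_s + v_k v_l ≅ G`. -/
def IsFeasible {V : Type*} (G : SimpleGraph V) (r s k l : V) : Prop :=
  G.Adj r s ∧ (Gᶜ.Adj k l ∨ s(k, l) = s(r, s)) ∧ Nonempty (replaceG G r s k l ≃g G)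

/-- The permutations realizing feasible edge-replacements of `G`. -/
def feasiblePerms {V : Type*} (G : SimpleGraph V) : Set (Equiv.Perm V) :=
  {σ | ∃ r s k l, IsFeasible G r s k l ∧ copyG G σ = replaceG G r s k l}

/-- The group `S_G` generated by all permutations realizing feasible edge-replacements. -/
def ampGroup {V : Type*} (G : SimpleGraph V) : Subgroup (Equiv.Perm V) :=
  Subgroup.closure (feasiblePerms G)

/-- `G` is a local amoeba if `S_G` is the full symmetric group. -/
def LocalAmoeba {V : Type*} (G : SimpleGraph V) : Prop := ampGroup G = ⊤

/-- Disjoint union of two graphs. -/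
def sumGraph {V W : Type*} (H : SimpleGraph V) (H' : SimpleGraph W) : SimpleGraph (V ⊕ W) :=
  SimpleGraph.map Sum.inl H ⊔ SimpleGraph.map Sum.inr H'

/-- `G` together with `t` additional isolated vertices. -/
def addIsolated {V : Type*} (G : SimpleGraph V) (t : ℕ) : SimpleGraph (V ⊕ Fin t) :=
  sumGraph G (⊥ : SimpleGraph (Fin t))

/-- `G` is a global amoeba if `G ∪ tK₁` is a local amoeba for all sufficiently large `t`. -/
def GlobalAmoeba {V : Type*} (G : SimpleGraph V) : Prop :=
  ∃ T : ℕ, ∀ t ≥ T, LocalAmoeba (addIsolated G t)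

/-!
A permutation `σ` realizing a feasible edge-replacement is an isomorphism `G_σ ≃g G`, and
`G_σ = G - e + e'` satisfies `G_σ ≤ G ⊔ e'` and `G ≤ G_σ ⊔ e`; hence `deg (σ v)` and `deg v`
differ by at most one. If no vertex had degree `r`, the vertices of degree `< r` would thus form a
set invariant under `S_G`. But `S_G = S_n` contains the transposition of a vertex of minimum
degree and one of maximum degree, which leaves that set.
-/

namespace SimpleGraph

variable {V : Type*}

lemma subsingleton_neighborSet_edge (u w v : V) : ((edge u w).neighborSet v).Subsingleton := by
  intro a ha b hb
  simp only [mem_neighborSet, edge_adj] at ha hb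
  grind

lemma degree_le_degree_add_one_of_le_sup_edge [Fintype V] {G H : SimpleGraph V}
    [DecidableRel G.Adj] [DecidableRel H.Adj] {u w : V} (h : H ≤ G ⊔ edge u w) (v : V) :
    H.degree v ≤ G.degree v + 1 := by
  classical
  have hedge : (edge u w).degree v ≤ 1 := by
    rw [← card_neighborFinset_eq_degree, Finset.card_le_one]
    simp only [mem_neighborFinset]
    exact fun a ha b hb => subsingleton_neighborSet_edge u w v ha hb
  calc H.degree v ≤ (G ⊔ edge u w).degree v := degree_le_of_le h
    _ = (G.neighborFinset v ∪ (edge u w).neighborFinset v).card := by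
      rw [← card_neighborFinset_eq_degree, neighborFinset_sup]
    _ ≤ G.degree v + (edge u w).degree v := Finset.card_union_le _ _
    _ ≤ G.degree v + 1 := by omega

end SimpleGraph

lemma replaceG_adj {V : Type*} (G : SimpleGraph V) (r s k l a b : V) :
    (replaceG G r s k l).Adj a b ↔
      ((G.Adj a b ∧ s(a, b) ≠ s(r, s)) ∨ s(a, b) = s(k, l)) ∧ a ≠ b :=
  Iff.rfl

lemma replaceG_le_sup_edge {V : Type*} (G : SimpleGraph V) (r s k l : V) :
    replaceG G r s k l ≤ G ⊔ edge k l := by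
  intro a b h
  rw [replaceG_adj] at h
  simp only [sup_adj, edge_adj]
  grind [Sym2.eq_iff]

lemma le_replaceG_sup_edge {V : Type*} (G : SimpleGraph V) (r s k l : V) :
    G ≤ replaceG G r s k l ⊔ edge r s := by
  intro a b h
  simp only [sup_adj, edge_adj, replaceG_adj]
  grind [Sym2.eq_iff, G.ne_of_adj h]

lemma degree_copyG {V : Type*} [Fintype V] (G : SimpleGraph V) [DecidableRel G.Adj]
    (σ : Equiv.Perm V) [DecidableRel (copyG G σ).Adj] (v : V) :
    (copyG G σ).degree v = G.degree (σ v) :=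
  (Iso.degree_eq (⟨σ, Iff.rfl⟩ : copyG G σ ≃g G) v).symm

lemma dist_degree_apply_le_one_of_mem_feasiblePerms {V : Type*} [Fintype V]
    {G : SimpleGraph V} [DecidableRel G.Adj] {σ : Equiv.Perm V} (hσ : σ ∈ feasiblePerms G)
    (v : V) : (G.degree (σ v)).dist (G.degree v) ≤ 1 := by
  classical
  obtain ⟨r, s, k, l, -, hcopy⟩ := hσ
  have hle : copyG G σ ≤ G ⊔ edge k l := hcopy ▸ replaceG_le_sup_edge G r s k l
  have hge : G ≤ copyG G σ ⊔ edge r s := hcopy ▸ le_replaceG_sup_edge G r s k l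
  have hup := degree_le_degree_add_one_of_le_sup_edge hle v
  have hdown := degree_le_degree_add_one_of_le_sup_edge hge v
  rw [degree_copyG] at hup hdown
  unfold Nat.dist
  omega

lemma Equiv.Perm.apply_mem_iff_of_mem_closure {α : Type*} {S : Set (Equiv.Perm α)} {A : Set α}
    (hS : ∀ σ ∈ S, ∀ a, σ a ∈ A ↔ a ∈ A) {σ : Equiv.Perm α} (hσ : σ ∈ Subgroup.closure S)
    (a : α) : σ a ∈ A ↔ a ∈ A := by
  induction hσ using Subgroup.closure_induction generalizing a with
  | mem τ hτ => exact hS τ hτ a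
  | one => rfl
  | mul τ π _ _ hτ hπ => exact (hτ (π a)).trans (hπ a)
  | inv τ _ hτ => simpa using (hτ (τ⁻¹ a)).symm

lemma degree_apply_lt_iff_of_mem_ampGroup {V : Type*} [Fintype V] {G : SimpleGraph V}
    [DecidableRel G.Adj] {r : ℕ} (hr : ∀ v, G.degree v ≠ r) {σ : Equiv.Perm V}
    (hσ : σ ∈ ampGroup G) (v : V) : G.degree (σ v) < r ↔ G.degree v < r := by
  refine Equiv.Perm.apply_mem_iff_of_mem_closure (A := {v | G.degree v < r}) ?_ hσ v
  intro τ hτ w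
  have hdist := dist_degree_apply_le_one_of_mem_feasiblePerms hτ w
  have hw := hr w
  have hτw := hr (τ w)
  change G.degree (τ w) < r ↔ G.degree w < r
  unfold Nat.dist at hdist
  omega

theorem stmt7 {V : Type*} [Fintype V] [Nonempty V] (G : SimpleGraph V) [DecidableRel G.Adj]
    (hG : LocalAmoeba G) (r : ℕ) (hmin : G.minDegree ≤ r) (hmax : r ≤ G.maxDegree) :
    ∃ v : V, G.degree v = r := by
  classical
  by_contra! hr
  obtain ⟨a, ha⟩ := G.exists_minimal_degree_vertex
  obtain ⟨b, hb⟩ := G.exists_maximal_degree_vertex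
  have hswap : Equiv.swap a b ∈ ampGroup G := hG ▸ Subgroup.mem_top _
  have hab := degree_apply_lt_iff_of_mem_ampGroup hr hswap a
  rw [Equiv.swap_apply_left] at hab
  have hra := hr a
  have hrb := hr b
  omega
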